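/- Let Ω = (0,1)×(0,1) and let u ∈ C²(Ω̄) satisfy −Δu(x,y) = f(x,y) for all (x,y) ∈ Ω and u = 0 on ∂Ω, where f is continuous on Ω̄. Let Γ = {(x,y) ∈ Ω : x = y} be the diagonal of the square. Then ∫_Γ u ds = (1/√2) ∫_Ω f(x,y)·G(x,y) dx dy, where the line integral over Γ equals √2·∫₀¹ u(t,t) dt. -/

import Mathlib

/-!
Off the boundary `f = -∂²u/∂x² - ∂²u/∂y²`. On each vertical segment `{a} × [0,1]` the function
`u(a,·)` vanishes at both ends, so the one-dimensional Green identity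
`∫₀¹ -v''(b) G(a,b) db = v(a)` turns the `∂²u/∂y²` part of `∫∫ f G` into `∫₀¹ u(a,a) da`.
After Fubini and the symmetry `G(a,b) = G(b,a)`, the same argument on horizontal segments
does this for the `∂²u/∂x²` part. Hence `∫∫ f G = 2 ∫₀¹ u(t,t) dt`.
-/

open MeasureTheory

/-- The Green function of `-u'' = f` on `(0,1)`, viewed as a function of two variables
on the unit square: `G(x,y) = y(1-x)` if `y ≤ x` and `G(x,y) = x(1-y)` if `x < y`. -/
noncomputable def greenFn (a s : ℝ) : ℝ :=
  if s ≤ a then s * (1 - a) else a * (1 - s)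

/-- The Laplacian of a function on `ℝ²`, written via iterated (Fréchet) derivatives:
`Δu(p) = ∂²u/∂x²(p) + ∂²u/∂y²(p)`. -/
noncomputable def lap2 (u : ℝ × ℝ → ℝ) (p : ℝ × ℝ) : ℝ :=
  fderiv ℝ (fun q => fderiv ℝ u q ((1:ℝ), (0:ℝ))) p ((1:ℝ), (0:ℝ)) +
  fderiv ℝ (fun q => fderiv ℝ u q ((0:ℝ), (1:ℝ))) p ((0:ℝ), (1:ℝ))

open Set Topology

lemma greenFn_eq_min (a b : ℝ) : greenFn a b = min (b * (1 - a)) (a * (1 - b)) := by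
  unfold greenFn
  split_ifs with h
  · rw [min_eq_left (by nlinarith)]
  · rw [min_eq_right (by nlinarith)]

lemma greenFn_of_le {a b : ℝ} (h : b ≤ a) : greenFn a b = b * (1 - a) := if_pos h

lemma greenFn_of_ge {a b : ℝ} (h : a ≤ b) : greenFn a b = a * (1 - b) := by
  rw [greenFn_eq_min, min_eq_right (by nlinarith)]

lemma greenFn_comm (a b : ℝ) : greenFn a b = greenFn b a := by
  rw [greenFn_eq_min, greenFn_eq_min, min_comm]

lemma continuous_greenFn : Continuous fun p : ℝ × ℝ => greenFn p.1 p.2 := by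
  simp only [greenFn_eq_min]
  fun_prop

section OneDim

variable {v v' v'' : ℝ → ℝ}

theorem integral_sub_mul_deriv2_eq {c d : ℝ} (k : ℝ) (hcd : c ≤ d)
    (hv : ContinuousOn v (Icc c d)) (hv' : ContinuousOn v' (Icc c d))
    (hv'' : ContinuousOn v'' (Icc c d))
    (hd : ∀ x ∈ Ioo c d, HasDerivAt v (v' x) x) (hd' : ∀ x ∈ Ioo c d, HasDerivAt v' (v'' x) x) :
    ∫ x in c..d, (x - k) * v'' x = ((d - k) * v' d - v d) - ((c - k) * v' c - v c) := by
  refine intervalIntegral.integral_eq_sub_of_hasDerivAt_of_le (f := fun x => (x - k) * v' x - v x)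
    hcd (((continuousOn_id.sub continuousOn_const).mul hv').sub hv) (fun x hx => ?_)
    (((continuousOn_id.sub continuousOn_const).mul hv'').intervalIntegrable_of_Icc hcd)
  exact ((((hasDerivAt_id' x).sub_const k).mul (hd' x hx)).sub (hd x hx)).congr_deriv (by ring)

theorem integral_neg_deriv2_mul_greenFn {a : ℝ} (ha : a ∈ Icc (0 : ℝ) 1)
    (hv : ContinuousOn v (Icc 0 1)) (hv' : ContinuousOn v' (Icc 0 1))
    (hv'' : ContinuousOn v'' (Icc 0 1))
    (hd : ∀ x ∈ Ioo 0 1, HasDerivAt v (v' x) x) (hd' : ∀ x ∈ Ioo 0 1, HasDerivAt v' (v'' x) x)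
    (h0 : v 0 = 0) (h1 : v 1 = 0) :
    ∫ b in (0 : ℝ)..1, -v'' b * greenFn a b = v a := by
  obtain ⟨ha0, ha1⟩ := ha
  have hl : Icc 0 a ⊆ Icc (0 : ℝ) 1 := Icc_subset_Icc_right ha1
  have hr : Icc a 1 ⊆ Icc (0 : ℝ) 1 := Icc_subset_Icc_left ha0
  have hcont : ContinuousOn (fun b => -v'' b * greenFn a b) (Icc 0 1) :=
    hv''.neg.mul (continuous_greenFn.comp₂ continuous_const continuous_id).continuousOn
  have hleft : ∫ b in (0 : ℝ)..a, -v'' b * greenFn a b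
      = -(1 - a) * ∫ b in (0 : ℝ)..a, (b - 0) * v'' b := by
    rw [← intervalIntegral.integral_const_mul]
    refine intervalIntegral.integral_congr fun b hb => ?_
    rw [uIcc_of_le ha0] at hb
    simp only [greenFn_of_le hb.2]
    ring
  have hright : ∫ b in a..(1 : ℝ), -v'' b * greenFn a b
      = a * ∫ b in a..(1 : ℝ), (b - 1) * v'' b := by
    rw [← intervalIntegral.integral_const_mul]
    refine intervalIntegral.integral_congr fun b hb => ?_
    rw [uIcc_of_le ha1] at hb
    simp only [greenFn_of_ge hb.1]
    ring
  rw [← intervalIntegral.integral_add_adjacent_intervals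
      ((hcont.mono hl).intervalIntegrable_of_Icc ha0)
      ((hcont.mono hr).intervalIntegrable_of_Icc ha1),
    hleft, hright,
    integral_sub_mul_deriv2_eq 0 ha0 (hv.mono hl) (hv'.mono hl) (hv''.mono hl)
      (fun x hx => hd x ⟨hx.1, hx.2.trans_le ha1⟩) (fun x hx => hd' x ⟨hx.1, hx.2.trans_le ha1⟩),
    integral_sub_mul_deriv2_eq 1 ha1 (hv.mono hr) (hv'.mono hr) (hv''.mono hr)
      (fun x hx => hd x ⟨ha0.trans_lt hx.1, hx.2⟩) (fun x hx => hd' x ⟨ha0.trans_lt hx.1, hx.2⟩),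
    h0, h1]
  ring

end OneDim

section SecondDerivWithin

variable {E : Type*} [NormedAddCommGroup E] [NormedSpace ℝ E] {s : Set E} {u : E → ℝ}

/-- Taken within `s` so that, for `s` the closed square, it is continuous up to the boundary;
in the interior it is the second derivative used in `lap2`. -/
noncomputable def secondDerivWithin (s : Set E) (u : E → ℝ) (e p : E) : ℝ :=
  fderivWithin ℝ (fun q => fderivWithin ℝ u s q e) s p e

lemma secondDerivWithin_of_mem_nhds {p : E} (e : E) (h : s ∈ 𝓝 p) :
    secondDerivWithin s u e p = fderiv ℝ (fun q => fderiv ℝ u q e) p e := by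
  rw [secondDerivWithin, fderivWithin_of_mem_nhds h]
  congr 1
  refine Filter.EventuallyEq.fderiv_eq ?_
  filter_upwards [eventually_mem_nhds_iff.2 h] with q hq
  rw [fderivWithin_of_mem_nhds hq]

lemma ContDiffOn.contDiffOn_fderivWithin_apply (hu : ContDiffOn ℝ 2 u s) (hs : UniqueDiffOn ℝ s)
    (e : E) : ContDiffOn ℝ 1 (fun q => fderivWithin ℝ u s q e) s :=
  (hu.fderivWithin hs (by norm_num)).clm_apply contDiffOn_const

lemma ContDiffOn.continuousOn_secondDerivWithin (hu : ContDiffOn ℝ 2 u s)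
    (hs : UniqueDiffOn ℝ s) (e : E) : ContinuousOn (secondDerivWithin s u e) s :=
  ((hu.contDiffOn_fderivWithin_apply hs e).continuousOn_fderivWithin hs le_rfl).clm_apply
    continuousOn_const

lemma DifferentiableOn.hasDerivAt_comp_of_mem_nhds {F : Type*} [NormedAddCommGroup F]
    [NormedSpace ℝ F] {g : E → F} {γ : ℝ → E} {e : E} {t : ℝ} (hg : DifferentiableOn ℝ g s)
    (hγ : HasDerivAt γ e t) (hs : s ∈ 𝓝 (γ t)) :
    HasDerivAt (fun t => g (γ t)) (fderivWithin ℝ g s (γ t) e) t := by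
  rw [fderivWithin_of_mem_nhds hs]
  exact (hg.differentiableAt hs).hasFDerivAt.comp_hasDerivAt t hγ

theorem integral_neg_secondDerivWithin_mul_greenFn (hs : UniqueDiffOn ℝ s)
    (hu : ContDiffOn ℝ 2 u s) {γ : ℝ → E} {e : E} (hγ : ∀ t, HasDerivAt γ e t)
    (hγs : MapsTo γ (Icc 0 1) s) (hγint : ∀ t ∈ Ioo (0 : ℝ) 1, s ∈ 𝓝 (γ t))
    (h0 : u (γ 0) = 0) (h1 : u (γ 1) = 0) {a : ℝ} (ha : a ∈ Icc (0 : ℝ) 1) :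
    ∫ b in (0 : ℝ)..1, -secondDerivWithin s u e (γ b) * greenFn a b = u (γ a) := by
  have hγc : ContinuousOn γ (Icc 0 1) :=
    (continuous_iff_continuousAt.2 fun t => (hγ t).continuousAt).continuousOn
  have hu' := hu.contDiffOn_fderivWithin_apply hs e
  exact integral_neg_deriv2_mul_greenFn (v' := fun t => fderivWithin ℝ u s (γ t) e) ha
    (hu.continuousOn.comp hγc hγs) (hu'.continuousOn.comp hγc hγs)
    ((hu.continuousOn_secondDerivWithin hs e).comp hγc hγs)
    (fun t ht => (hu.differentiableOn two_ne_zero).hasDerivAt_comp_of_mem_nhds (hγ t) (hγint t ht))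
    (fun t ht => (hu'.differentiableOn one_ne_zero).hasDerivAt_comp_of_mem_nhds (hγ t) (hγint t ht))
    h0 h1

end SecondDerivWithin

lemma lap2_eq_secondDerivWithin {s : Set (ℝ × ℝ)} {u : ℝ × ℝ → ℝ} {p : ℝ × ℝ} (h : s ∈ 𝓝 p) :
    lap2 u p = secondDerivWithin s u (1, 0) p + secondDerivWithin s u (0, 1) p := by
  rw [lap2, secondDerivWithin_of_mem_nhds _ h, secondDerivWithin_of_mem_nhds _ h]

section Rectangle

variable {w : ℝ × ℝ → ℝ} {a b c d : ℝ}

lemma ContinuousOn.integrableOn_Ioc_prod_Ioc (hw : ContinuousOn w (Icc a b ×ˢ Icc c d)) :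
    IntegrableOn w (Ioc a b ×ˢ Ioc c d) :=
  (hw.integrableOn_compact (isCompact_Icc.prod isCompact_Icc)).mono_set
    (prod_mono Ioc_subset_Icc_self Ioc_subset_Icc_self)

lemma ContinuousOn.intervalIntegral_intervalIntegral_swap (hab : a ≤ b) (hcd : c ≤ d)
    (hw : ContinuousOn w (Icc a b ×ˢ Icc c d)) :
    ∫ x in a..b, ∫ y in c..d, w (x, y) = ∫ y in c..d, ∫ x in a..b, w (x, y) :=
  MeasureTheory.intervalIntegral_intervalIntegral_swap <| by
    rw [uIoc_of_le hab, uIoc_of_le hcd]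
    exact hw.integrableOn_Ioc_prod_Ioc

lemma ContinuousOn.intervalIntegrable_intervalIntegral (hab : a ≤ b) (hcd : c ≤ d)
    (hw : ContinuousOn w (Icc a b ×ˢ Icc c d)) :
    IntervalIntegrable (fun x => ∫ y in c..d, w (x, y)) volume a b := by
  have h := hw.integrableOn_Ioc_prod_Ioc
  rw [IntegrableOn, Measure.volume_eq_prod, ← Measure.prod_restrict] at h
  rw [intervalIntegrable_iff_integrableOn_Ioc_of_le hab]
  simpa only [intervalIntegral.integral_of_le hcd, IntegrableOn] using h.integral_prod_left

lemma ContinuousOn.intervalIntegrable_slice (hcd : c ≤ d)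
    (hw : ContinuousOn w (Icc a b ×ˢ Icc c d)) {x : ℝ} (hx : x ∈ Icc a b) :
    IntervalIntegrable (fun y => w (x, y)) volume c d :=
  (hw.comp (Continuous.prodMk_right x).continuousOn fun _ hy => ⟨hx, hy⟩).intervalIntegrable_of_Icc
    hcd

end Rectangle

section UnitSquare

variable {u : ℝ × ℝ → ℝ}

lemma uniqueDiffOn_Icc_prod_Icc : UniqueDiffOn ℝ (Icc (0 : ℝ) 1 ×ˢ Icc (0 : ℝ) 1) :=
  (uniqueDiffOn_Icc one_pos).prod (uniqueDiffOn_Icc one_pos)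

lemma Icc_prod_Icc_mem_nhds {x y : ℝ} (hx : x ∈ Ioo (0 : ℝ) 1) (hy : y ∈ Ioo (0 : ℝ) 1) :
    Icc (0 : ℝ) 1 ×ˢ Icc (0 : ℝ) 1 ∈ 𝓝 (x, y) :=
  prod_mem_nhds (Icc_mem_nhds hx.1 hx.2) (Icc_mem_nhds hy.1 hy.2)

lemma integral_neg_secondDerivWithin_mul_greenFn_vertical
    (hu : ContDiffOn ℝ 2 u (Icc (0 : ℝ) 1 ×ˢ Icc (0 : ℝ) 1))
    (hbc : ∀ p ∈ frontier (Ioo (0 : ℝ) 1 ×ˢ Ioo (0 : ℝ) 1), u p = 0)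
    {a : ℝ} (ha : a ∈ Ioo (0 : ℝ) 1) :
    ∫ b in (0 : ℝ)..1,
      -secondDerivWithin (Icc 0 1 ×ˢ Icc 0 1) u (0, 1) (a, b) * greenFn a b = u (a, a) :=
  integral_neg_secondDerivWithin_mul_greenFn uniqueDiffOn_Icc_prod_Icc hu (γ := fun t => (a, t))
    (fun t => (hasDerivAt_const t a).prodMk (hasDerivAt_id t))
    (fun _ ht => ⟨Ioo_subset_Icc_self ha, ht⟩) (fun _ ht => Icc_prod_Icc_mem_nhds ha ht)
    (hbc _ (by simp [frontier_prod_eq, Ioo_subset_Icc_self ha]))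
    (hbc _ (by simp [frontier_prod_eq, Ioo_subset_Icc_self ha])) (Ioo_subset_Icc_self ha)

lemma integral_neg_secondDerivWithin_mul_greenFn_horizontal
    (hu : ContDiffOn ℝ 2 u (Icc (0 : ℝ) 1 ×ˢ Icc (0 : ℝ) 1))
    (hbc : ∀ p ∈ frontier (Ioo (0 : ℝ) 1 ×ˢ Ioo (0 : ℝ) 1), u p = 0)
    {b : ℝ} (hb : b ∈ Ioo (0 : ℝ) 1) :
    ∫ a in (0 : ℝ)..1,
      -secondDerivWithin (Icc 0 1 ×ˢ Icc 0 1) u (1, 0) (a, b) * greenFn a b = u (b, b) := by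
  simp only [greenFn_comm _ b]
  exact integral_neg_secondDerivWithin_mul_greenFn uniqueDiffOn_Icc_prod_Icc hu
    (γ := fun t => (t, b)) (fun t => (hasDerivAt_id t).prodMk (hasDerivAt_const t b))
    (fun _ ht => ⟨ht, Ioo_subset_Icc_self hb⟩) (fun _ ht => Icc_prod_Icc_mem_nhds ht hb)
    (hbc _ (by simp [frontier_prod_eq, Ioo_subset_Icc_self hb]))
    (hbc _ (by simp [frontier_prod_eq, Ioo_subset_Icc_self hb])) (Ioo_subset_Icc_self hb)

theorem integral_integral_mul_greenFn_eq_two_mul_integral_diag {f : ℝ × ℝ → ℝ}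
    (hu : ContDiffOn ℝ 2 u (Icc (0 : ℝ) 1 ×ˢ Icc (0 : ℝ) 1))
    (hpde : ∀ p ∈ Ioo (0 : ℝ) 1 ×ˢ Ioo (0 : ℝ) 1, -lap2 u p = f p)
    (hbc : ∀ p ∈ frontier (Ioo (0 : ℝ) 1 ×ˢ Ioo (0 : ℝ) 1), u p = 0) :
    ∫ a in (0 : ℝ)..1, ∫ b in (0 : ℝ)..1, f (a, b) * greenFn a b
      = 2 * ∫ t in (0 : ℝ)..1, u (t, t) := by
  set S := Icc (0 : ℝ) 1 ×ˢ Icc (0 : ℝ) 1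
  have hw (e : ℝ × ℝ) :
      ContinuousOn (fun p : ℝ × ℝ => -secondDerivWithin S u e p * greenFn p.1 p.2) S :=
    (hu.continuousOn_secondDerivWithin uniqueDiffOn_Icc_prod_Icc e).neg.mul
      continuous_greenFn.continuousOn
  have hsplit : EqOn (fun a => ∫ b in (0 : ℝ)..1, f (a, b) * greenFn a b)
      (fun a => u (a, a) + ∫ b in (0 : ℝ)..1, -secondDerivWithin S u (1, 0) (a, b) * greenFn a b)
      (Ioo 0 1) := fun a ha => by
    dsimp only
    rw [← integral_neg_secondDerivWithin_mul_greenFn_vertical hu hbc ha,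
      ← intervalIntegral.integral_add
        ((hw _).intervalIntegrable_slice zero_le_one (Ioo_subset_Icc_self ha))
        ((hw _).intervalIntegrable_slice zero_le_one (Ioo_subset_Icc_self ha))]
    refine intervalIntegral.integral_congr_Ioo_of_le zero_le_one fun b hb => ?_
    rw [← hpde (a, b) ⟨ha, hb⟩, lap2_eq_secondDerivWithin (Icc_prod_Icc_mem_nhds ha hb)]
    ring
  have hdiag : IntervalIntegrable (fun t => u (t, t)) volume 0 1 :=
    (hu.continuousOn.comp (continuous_id.prodMk continuous_id).continuousOn
      fun _ ht => ⟨ht, ht⟩).intervalIntegrable_of_Icc zero_le_one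
  rw [intervalIntegral.integral_congr_Ioo_of_le zero_le_one hsplit,
    intervalIntegral.integral_add hdiag
      ((hw _).intervalIntegrable_intervalIntegral zero_le_one zero_le_one),
    (hw _).intervalIntegral_intervalIntegral_swap zero_le_one zero_le_one,
    intervalIntegral.integral_congr_Ioo_of_le zero_le_one
      fun b hb => integral_neg_secondDerivWithin_mul_greenFn_horizontal hu hbc hb]
  ring

end UnitSquare

theorem stmt11_general
    (u f : ℝ × ℝ → ℝ)
    (hu : ContDiffOn ℝ 2 u (Set.Icc (0:ℝ) 1 ×ˢ Set.Icc (0:ℝ) 1))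
    (hpde : ∀ p ∈ Set.Ioo (0:ℝ) 1 ×ˢ Set.Ioo (0:ℝ) 1, -lap2 u p = f p)
    (hbc : ∀ p ∈ frontier (Set.Ioo (0:ℝ) 1 ×ˢ Set.Ioo (0:ℝ) 1), u p = 0) :
    Real.sqrt 2 * ∫ t in (0:ℝ)..1, u (t, t) =
      (1 / Real.sqrt 2) *
        ∫ a in (0:ℝ)..1, ∫ b in (0:ℝ)..1, f (a, b) * greenFn a b := by
  rw [integral_integral_mul_greenFn_eq_two_mul_integral_diag hu hpde hbc]
  field_simp
  rw [Real.sq_sqrt zero_le_two]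
  ring

theorem stmt11
    (u f : ℝ × ℝ → ℝ)
    (hu : ContDiffOn ℝ 2 u (Set.Icc (0:ℝ) 1 ×ˢ Set.Icc (0:ℝ) 1))
    (hf : ContinuousOn f (Set.Icc (0:ℝ) 1 ×ˢ Set.Icc (0:ℝ) 1))
    (hpde : ∀ p ∈ Set.Ioo (0:ℝ) 1 ×ˢ Set.Ioo (0:ℝ) 1, -lap2 u p = f p)
    (hbc : ∀ p ∈ frontier (Set.Ioo (0:ℝ) 1 ×ˢ Set.Ioo (0:ℝ) 1), u p = 0) :
    Real.sqrt 2 * ∫ t in (0:ℝ)..1, u (t, t) =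
      (1 / Real.sqrt 2) *
        ∫ a in (0:ℝ)..1, ∫ b in (0:ℝ)..1, f (a, b) * greenFn a b :=
  stmt11_general u f hu hpde hbc
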